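/- Under the assumption that no cumulative sum π_k + π'_l equals any threshold, every equilibrium x* of the abstract dynamics ẋ ∈ 𝒳(x) (i.e., every x* with 0 ∈ 𝒳(x*)) is one of the following: a clean-cut point x* = π_i + π'_j lying in (max{τ'_j, τ_{i+1}}, min{τ'_{j+1}, τ_i}); an anticoordinating threshold x* = τ_i with π_{i−1} + π'_j < τ_i < π_i + π'_j; or a coordinating threshold x* = τ'_j with π_i + π'_{j−1} < τ'_j < π_i + π'_j. -/
import Mathlib


/-- Cumulative population proportion: `cum ρ i = ρ 1 + ⋯ + ρ i`. -/
noncomputable def cum (ρ : ℕ → ℝ) (i : ℕ) : ℝ := ∑ k ∈ Finset.Icc 1 i, ρ k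

/-- The set-valued map `𝒳` of the abstract best-response dynamics, for a population with
`pa` anticoordinating subpopulations (thresholds `τ 1 > ⋯ > τ pa`, proportions `ρ`) and
`pc` coordinating subpopulations (thresholds `τ' 1 < ⋯ < τ' pc`, proportions `ρ'`),
with the conventions `τ (pa+1) = τ' 0 = 0` and `τ 0 = τ' (pc+1) = 1`. -/
noncomputable def Xabs (pa pc : ℕ) (τ τ' ρ ρ' : ℕ → ℝ) (x : ℝ) : Set ℝ :=
  {v | (∃ i ∈ Finset.Icc 1 pa, ∃ j, x = τ i ∧
          IsGreatest {k | k ≤ pc ∧ τ' k < τ i} j ∧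
          v ∈ Set.Icc (cum ρ (i-1) + cum ρ' j - x) (cum ρ i + cum ρ' j - x)) ∨
       (∃ j ∈ Finset.Icc 1 pc, ∃ i, x = τ' j ∧
          IsGreatest {k | k ≤ pa ∧ τ' j < τ k} i ∧
          v ∈ Set.Icc (cum ρ i + cum ρ' (j-1) - x) (cum ρ i + cum ρ' j - x)) ∨
       (∃ i ≤ pa, ∃ j ≤ pc,
          x ∈ Set.Ioo (max (τ' j) (τ (i+1))) (min (τ' (j+1)) (τ i)) ∧
          v = cum ρ i + cum ρ' j - x)}

theorem stmt10 (pa pc : ℕ) (τ τ' ρ ρ' : ℕ → ℝ)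
    (hτ0 : τ 0 = 1) (hτtop : τ (pa+1) = 0) (hτp0 : τ' 0 = 0) (hτptop : τ' (pc+1) = 1)
    (hτdec : ∀ i j, 1 ≤ i → i < j → j ≤ pa → τ j < τ i)
    (hτpinc : ∀ i j, 1 ≤ i → i < j → j ≤ pc → τ' i < τ' j)
    (hτmem : ∀ i, 1 ≤ i → i ≤ pa → τ i ∈ Set.Ioo (0:ℝ) 1)
    (hτpmem : ∀ j, 1 ≤ j → j ≤ pc → τ' j ∈ Set.Ioo (0:ℝ) 1)
    (hρpos : ∀ i, 1 ≤ i → i ≤ pa → 0 < ρ i)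
    (hρppos : ∀ j, 1 ≤ j → j ≤ pc → 0 < ρ' j)
    (hassum : ∀ k ≤ pa, ∀ l ≤ pc,
      (∀ i, 1 ≤ i → i ≤ pa → cum ρ k + cum ρ' l ≠ τ i) ∧
      (∀ j, 1 ≤ j → j ≤ pc → cum ρ k + cum ρ' l ≠ τ' j))
    (x : ℝ) (hx : (0:ℝ) ∈ Xabs pa pc τ τ' ρ ρ' x) :
    (∃ i ≤ pa, ∃ j ≤ pc, x = cum ρ i + cum ρ' j ∧
        x ∈ Set.Ioo (max (τ' j) (τ (i+1))) (min (τ' (j+1)) (τ i))) ∨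
    (∃ i, 1 ≤ i ∧ i ≤ pa ∧ ∃ j, IsGreatest {k | k ≤ pc ∧ τ' k < τ i} j ∧
        x = τ i ∧ cum ρ (i-1) + cum ρ' j < τ i ∧ τ i < cum ρ i + cum ρ' j) ∨
    (∃ j, 1 ≤ j ∧ j ≤ pc ∧ ∃ i, IsGreatest {k | k ≤ pa ∧ τ' j < τ k} i ∧
        x = τ' j ∧ cum ρ i + cum ρ' (j-1) < τ' j ∧ τ' j < cum ρ i + cum ρ' j) := by
  rcases hx with ⟨i, hi, j, hxτ, hgj, h0⟩ | ⟨j, hj, i, hxτ, hgi, h0⟩ | ⟨i, hi, j, hj, hxI, h0⟩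
  · simp only [Finset.mem_Icc] at hi
    obtain ⟨hj_le, _⟩ := hgj.1
    have hle := h0
    simp only [Set.mem_Icc] at hle
    have h1 : cum ρ (i-1) + cum ρ' j ≤ x := by linarith [hle.1]
    have h2 : x ≤ cum ρ i + cum ρ' j := by linarith [hle.2]
    have hne1 : cum ρ (i-1) + cum ρ' j ≠ τ i :=
      (hassum (i-1) (le_trans (Nat.sub_le i 1) hi.2) j hj_le).1 i hi.1 hi.2
    have hne2 : cum ρ i + cum ρ' j ≠ τ i :=
      (hassum i hi.2 j hj_le).1 i hi.1 hi.2
    right; left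
    exact ⟨i, hi.1, hi.2, j, hgj, hxτ, by rw [hxτ] at h1; exact lt_of_le_of_ne h1 hne1,
      by rw [hxτ] at h2; exact lt_of_le_of_ne (hxτ ▸ h2) (Ne.symm hne2)⟩
  · simp only [Finset.mem_Icc] at hj
    obtain ⟨hi_le, _⟩ := hgi.1
    have hle := h0
    simp only [Set.mem_Icc] at hle
    have h1 : cum ρ i + cum ρ' (j-1) ≤ x := by linarith [hle.1]
    have h2 : x ≤ cum ρ i + cum ρ' j := by linarith [hle.2]
    have hne1 : cum ρ i + cum ρ' (j-1) ≠ τ' j :=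
      (hassum i hi_le (j-1) (le_trans (Nat.sub_le j 1) hj.2)).2 j hj.1 hj.2
    have hne2 : cum ρ i + cum ρ' j ≠ τ' j :=
      (hassum i hi_le j hj.2).2 j hj.1 hj.2
    right; right
    rw [hxτ] at h1 h2
    exact ⟨j, hj.1, hj.2, i, hgi, hxτ, lt_of_le_of_ne h1 hne1, lt_of_le_of_ne h2 (Ne.symm hne2)⟩
  · left
    exact ⟨i, hi, j, hj, by linarith [h0], hxI⟩
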